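/- Let ω ∈ ℂ^d, σ > 0 and ρ' > 0. For every g ∈ 𝕀_σ⁻(ω)𝒜_d(ρ') (i.e. g ∈ 𝒜_d(ρ') with g_k = 0 unless |ω·k| > σ‖k‖), the function (D·ω)⁻¹g with Fourier coefficients g_k/(2πi k·ω) for k ∈ I_σ⁻(ω) (and 0 otherwise) belongs to 𝕀_σ⁻(ω)𝒜'_d(ρ') and satisfies ‖(D·ω)⁻¹g‖'_{ρ'} ≤ (2/σ)·‖g‖_{ρ'}. Moreover, h = (D·ω)⁻¹g solves Dh·ω = g, i.e. (D·ω)⁻¹ is a bounded right inverse, of operator norm at most 2/σ, of the directional derivative operator h ↦ Dh·ω from 𝕀_σ⁻(ω)𝒜'_d(ρ') to 𝕀_σ⁻(ω)𝒜_d(ρ'). -/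

import Mathlib

open scoped BigOperators ENNReal Classical
open Complex

noncomputable section

namespace Renorm

/-- ℓ¹ norm of an integer frequency vector. -/
def nZ {d : ℕ} (k : Fin d → ℤ) : ℝ := ∑ i, |(k i : ℝ)|

/-- `ℂ^m` with the ℓ¹ norm. -/
abbrev V (m : ℕ) : Type := PiLp 1 (fun _ : Fin m => ℂ)

/-- The Banach space underlying `𝒜_d(r)` (and `𝒜'_d(r)`):  an element stores, at
index `k ∈ ℤ^d`, the Fourier coefficient multiplied by the corresponding weight,
so that the `lp`-norm coincides with the norm `‖·‖_r` (resp. `‖·‖'_r`). -/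
abbrev AA (d m : ℕ) : Type := lp (fun _ : (Fin d → ℤ) => V m) 1

/-- weight of the norm of `𝒜_d(r)` -/
def w {d : ℕ} (r : ℝ) (k : Fin d → ℤ) : ℝ := Real.exp (r * nZ k)

/-- weight of the norm of `𝒜'_d(r)` -/
def w' {d : ℕ} (r : ℝ) (k : Fin d → ℤ) : ℝ := (1 + 2 * Real.pi * nZ k) * Real.exp (r * nZ k)

/-- Fourier coefficient of `a` regarded as an element of `𝒜_d(r)`. -/
def coeffA {d m : ℕ} (r : ℝ) (a : AA d m) (k : Fin d → ℤ) : V m := (w r k)⁻¹ • a k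

/-- Fourier coefficient of `a` regarded as an element of `𝒜'_d(r)`. -/
def coeffA' {d m : ℕ} (r : ℝ) (a : AA d m) (k : Fin d → ℤ) : V m := (w' r k)⁻¹ • a k

/-- `k · θ` -/
def kdot {d : ℕ} (k : Fin d → ℤ) (θ : V d) : ℂ := ∑ i, (k i : ℂ) * θ i

/-- the Fourier character `e^{2πi k·θ}` -/
def e2 {d : ℕ} (k : Fin d → ℤ) (θ : V d) : ℂ := Complex.exp (2 * Real.pi * Complex.I * kdot k θ)

/-- the function represented by `a`, regarded as an element of `𝒜_d(r)` -/
def funA {d m : ℕ} (r : ℝ) (a : AA d m) (θ : V d) : V m := ∑' k, e2 k θ • coeffA r a k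

/-- the function represented by `a`, regarded as an element of `𝒜'_d(r)` -/
def funA' {d m : ℕ} (r : ℝ) (a : AA d m) (θ : V d) : V m := ∑' k, e2 k θ • coeffA' r a k

/-- the complex domain `D(r)` -/
def Dom (d : ℕ) (r : ℝ) : Set (V d) := {θ | (∑ i, |(θ i).im|) < r / (2 * Real.pi)}

/-- the norm `‖·‖_s` of a family of Fourier coefficients -/
def normA {d m : ℕ} (s : ℝ) (c : (Fin d → ℤ) → V m) : ℝ := ∑' k, ‖c k‖ * w s k

/-- the norm `‖·‖'_s` of a family of Fourier coefficients -/
def normA' {d m : ℕ} (s : ℝ) (c : (Fin d → ℤ) → V m) : ℝ := ∑' k, ‖c k‖ * w' s k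

/-- the set `I_σ⁻(ω)` of far from resonance indices -/
def Iminus {d : ℕ} (σ : ℝ) (ω : V d) : Set (Fin d → ℤ) :=
  {k | σ * nZ k < ‖∑ i, ω i * (k i : ℂ)‖}

/-- the constant vector field `c` as an element of `𝒜_d(r)` / `𝒜'_d(r)`
(both weights are `1` at `k = 0`). -/
def const {d m : ℕ} (c : V m) : AA d m := lp.single 1 (0 : Fin d → ℤ) c

/-- the subspace of `𝒜_d` / `𝒜'_d` of vector fields with Fourier modes supported in `S` -/
def SubOn (d m : ℕ) (S : Set (Fin d → ℤ)) : Submodule ℂ (AA d m) where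
  carrier := {a | ∀ k ∉ S, a k = 0}
  add_mem' := by
    intro a b ha hb k hk
    rw [lp.coeFn_add, Pi.add_apply, ha k hk, hb k hk, add_zero]
  zero_mem' := by
    intro k _
    rw [lp.coeFn_zero, Pi.zero_apply]
  smul_mem' := by
    intro c a ha k hk
    rw [lp.coeFn_smul, Pi.smul_apply, ha k hk, smul_zero]

/-- real vector as a complex one -/
def toC {d : ℕ} (ω : Fin d → ℝ) : V d := WithLp.toLp 1 (fun i => (ω i : ℂ))

section WeightedBound

variable {α : Type*} {E : α → Type*} [∀ i, NormedAddCommGroup (E i)] [∀ i, NormedSpace ℝ (E i)]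
  {p : ℝ≥0∞} {C : ℝ}

theorem _root_.Memℓp.of_norm_le_mul (hC : 0 ≤ C) (y : lp E p) {f : ∀ i, E i}
    (hf : ∀ i, ‖f i‖ ≤ C * ‖y i‖) : Memℓp f p :=
  (lp.memℓp (C • y)).mono' fun i => by
    rw [lp.coeFn_smul, Pi.smul_apply, norm_smul, Real.norm_of_nonneg hC]
    exact hf i

theorem _root_.lp.norm_le_mul_of_forall_le [Fact (1 ≤ p)] (hC : 0 ≤ C) {x y : lp E p}
    (h : ∀ i, ‖x i‖ ≤ C * ‖y i‖) : ‖x‖ ≤ C * ‖y‖ := by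
  have hp : p ≠ 0 := (zero_lt_one.trans_le Fact.out).ne'
  calc ‖x‖ ≤ ‖C • y‖ := lp.norm_mono hp fun i => by
        rw [lp.coeFn_smul, Pi.smul_apply, norm_smul, Real.norm_of_nonneg hC]
        exact h i
    _ = C * ‖y‖ := by rw [norm_smul, Real.norm_of_nonneg hC]

end WeightedBound

theorem nZ_nonneg {d : ℕ} (k : Fin d → ℤ) : 0 ≤ nZ k :=
  Finset.sum_nonneg fun _ _ => abs_nonneg _

theorem one_le_nZ_of_ne_zero {d : ℕ} {k : Fin d → ℤ} (hk : k ≠ 0) : 1 ≤ nZ k := by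
  obtain ⟨i, hi⟩ := Function.ne_iff.mp hk
  calc (1 : ℝ) ≤ |(k i : ℝ)| := by
        rw [← Int.cast_abs, ← Int.cast_one, Int.cast_le]
        exact Int.one_le_abs hi
    _ ≤ nZ k := Finset.single_le_sum (f := fun i => |(k i : ℝ)|)
        (fun _ _ => abs_nonneg _) (Finset.mem_univ i)

theorem ne_zero_of_mem_Iminus {d : ℕ} {σ : ℝ} {ω : V d} {k : Fin d → ℤ}
    (hk : k ∈ Iminus σ ω) : k ≠ 0 := by
  rintro rfl
  simp [Iminus, nZ] at hk

def dirSymbol {d : ℕ} (ω : V d) (k : Fin d → ℤ) : ℂ :=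
  2 * Real.pi * Complex.I * ∑ i, (k i : ℂ) * ω i

theorem norm_dirSymbol {d : ℕ} (ω : V d) (k : Fin d → ℤ) :
    ‖dirSymbol ω k‖ = 2 * Real.pi * ‖∑ i, ω i * (k i : ℂ)‖ := by
  simp only [dirSymbol, norm_mul, Complex.norm_ofNat, Complex.norm_real, Real.norm_of_nonneg
    Real.pi_pos.le, Complex.norm_I, mul_one, mul_comm (k _ : ℂ)]

theorem dirSymbol_ne_zero_of_mem_Iminus {d : ℕ} {σ : ℝ} {ω : V d} {k : Fin d → ℤ}
    (hσ : 0 ≤ σ) (hk : k ∈ Iminus σ ω) : dirSymbol ω k ≠ 0 := by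
  rw [← norm_pos_iff, norm_dirSymbol]
  have : 0 < ‖∑ i, ω i * (k i : ℂ)‖ := (mul_nonneg hσ (nZ_nonneg k)).trans_lt hk
  positivity

/-- `(D·ω)⁻¹` acting on the stored values of `AA`: besides dividing by the symbol it converts
the weight `w` of `𝒜_d` into the weight `w' = (1 + 2π‖k‖) w` of `𝒜'_d`. -/
def invDirMultiplier {d : ℕ} (ω : V d) (k : Fin d → ℤ) : ℂ :=
  ((1 + 2 * Real.pi * nZ k : ℝ) : ℂ) * (dirSymbol ω k)⁻¹

theorem norm_invDirMultiplier_le {d : ℕ} {σ : ℝ} {ω : V d} {k : Fin d → ℤ}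
    (hσ : 0 < σ) (hk : k ∈ Iminus σ ω) : ‖invDirMultiplier ω k‖ ≤ 2 / σ := by
  have hn := one_le_nZ_of_ne_zero (ne_zero_of_mem_Iminus hk)
  have hsym : 2 * Real.pi * (σ * nZ k) < ‖dirSymbol ω k‖ := by
    rw [norm_dirSymbol]
    exact mul_lt_mul_of_pos_left hk (by positivity)
  have h2πn : 1 ≤ 2 * Real.pi * nZ k := by nlinarith [Real.pi_gt_three]
  rw [invDirMultiplier, norm_mul, norm_inv, Complex.norm_real,
    Real.norm_of_nonneg (by positivity), ← div_eq_mul_inv,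
    div_le_div_iff₀ (hsym.trans_le' (by positivity)) hσ]
  -- `(1 + 2π‖k‖) σ ≤ 4π‖k‖ σ < 2 ‖2πi k·ω‖`
  nlinarith [mul_le_mul_of_nonneg_right h2πn hσ.le]

theorem coeffA'_eq_inv_dirSymbol_smul {d m : ℕ} {ω : V d} {r : ℝ} {a g : AA d m}
    {k : Fin d → ℤ} (ha : a k = invDirMultiplier ω k • g k) :
    coeffA' r a k = (dirSymbol ω k)⁻¹ • coeffA r g k := by
  have hw : ((1 + 2 * Real.pi * nZ k : ℝ) : ℂ) ≠ 0 :=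
    Complex.ofReal_ne_zero.mpr (by have := nZ_nonneg k; positivity)
  rw [coeffA', coeffA, ha, ← Complex.coe_smul, ← Complex.coe_smul, smul_smul, smul_smul, w', w,
    invDirMultiplier]
  congr 1
  push_cast at hw ⊢
  field_simp

theorem statement10_general {d : ℕ} (ω : V d) (σ : ℝ) (hσ : 0 < σ)
    (ρ' : ℝ)
    (g : AA d d) (hg : ∀ k ∉ Iminus σ ω, g k = 0) :
    ∃ h : AA d d,
      (∀ k ∈ Iminus σ ω,
        coeffA' ρ' h k =
          (2 * Real.pi * Complex.I * ∑ i, (k i : ℂ) * ω i)⁻¹ • coeffA ρ' g k) ∧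
      (∀ k ∉ Iminus σ ω, h k = 0) ∧
      ‖h‖ ≤ 2 / σ * ‖g‖ ∧
      (∀ k, (2 * Real.pi * Complex.I * ∑ i, (k i : ℂ) * ω i) • coeffA' ρ' h k
          = coeffA ρ' g k) := by
  have hbound : ∀ k, ‖invDirMultiplier ω k • g k‖ ≤ 2 / σ * ‖g k‖ := fun k => by
    by_cases hk : k ∈ Iminus σ ω
    · rw [norm_smul]
      exact mul_le_mul_of_nonneg_right (norm_invDirMultiplier_le hσ hk) (norm_nonneg _)
    · simp [hg k hk]
  let h : AA d d := ⟨fun k => invDirMultiplier ω k • g k,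
    Memℓp.of_norm_le_mul (by positivity) g hbound⟩
  have hcoeff (k) : coeffA' ρ' h k = (dirSymbol ω k)⁻¹ • coeffA ρ' g k :=
    coeffA'_eq_inv_dirSymbol_smul rfl
  refine ⟨h, fun k _ => hcoeff k, fun k hk => ?_,
    lp.norm_le_mul_of_forall_le (by positivity) hbound, fun k => ?_⟩
  · show invDirMultiplier ω k • g k = 0
    rw [hg k hk, smul_zero]
  · change dirSymbol ω k • coeffA' ρ' h k = coeffA ρ' g k
    by_cases hk : k ∈ Iminus σ ω
    · rw [hcoeff, smul_inv_smul₀ (dirSymbol_ne_zero_of_mem_Iminus hσ.le hk)]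
    · simp [hcoeff, coeffA, hg k hk]

/-- the bounded right inverse `(D·ω)⁻¹` of the directional derivative
`h ↦ Dh·ω` on the far-from-resonance subspace, with operator norm at most `2/σ`. -/
theorem statement10 {d : ℕ} (hd : 2 ≤ d) (ω : V d) (σ : ℝ) (hσ : 0 < σ)
    (ρ' : ℝ) (hρ' : 0 < ρ')
    (g : AA d d) (hg : ∀ k ∉ Iminus σ ω, g k = 0) :
    ∃ h : AA d d,
      (∀ k ∈ Iminus σ ω,
        coeffA' ρ' h k =
          (2 * Real.pi * Complex.I * ∑ i, (k i : ℂ) * ω i)⁻¹ • coeffA ρ' g k) ∧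
      (∀ k ∉ Iminus σ ω, h k = 0) ∧
      ‖h‖ ≤ 2 / σ * ‖g‖ ∧
      (∀ k, (2 * Real.pi * Complex.I * ∑ i, (k i : ℂ) * ω i) • coeffA' ρ' h k
          = coeffA ρ' g k) :=
  statement10_general ω σ hσ ρ' g hg

end Renorm
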